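/- Let α, U, A : ℂ → ℝ be continuously real-differentiable real-valued functions, and suppose ψ = (ψ₁, ψ₂) : ℂ → ℂ² satisfies the Gauss–Weingarten system ∂ψ₁ = ∂α·ψ₁ + A·e^{−α}·ψ₂, ∂ψ₂ = −U·ψ₁, ∂̄ψ₁ = U·ψ₂, ∂̄ψ₂ = −A·e^{−α}·ψ₁ + ∂̄α·ψ₂ on ℂ. Then ψ* = (ψ*₁, ψ*₂) with ψ*₁ = i·e^{−α}·ψ₂ and ψ*₂ = i·e^{−α}·ψ₁ satisfies the Dirac equation with potential U* = −A·e^{−α}: ∂ψ*₂ + U*·ψ*₁ = 0 and −∂̄ψ*₁ + U*·ψ*₂ = 0. -/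

import Mathlib

open Complex

/-- Wirtinger derivative ∂f = ½(∂f/∂x − i ∂f/∂y). -/
noncomputable def wd (f : ℂ → ℂ) (z : ℂ) : ℂ :=
  (1 / 2 : ℂ) * (fderiv ℝ f z 1 - Complex.I * fderiv ℝ f z Complex.I)

/-- Wirtinger derivative ∂̄f = ½(∂f/∂x + i ∂f/∂y). -/
noncomputable def wdb (f : ℂ → ℂ) (z : ℂ) : ℂ :=
  (1 / 2 : ℂ) * (fderiv ℝ f z 1 + Complex.I * fderiv ℝ f z Complex.I)

/-!
Conjugating by `e^{-α}` removes the `∂α` terms of the Gauss–Weingarten system: by the Leibniz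
rule, `∂(e^{-α} ψ₁) = e^{-α} (∂ψ₁ - ∂α ψ₁) = A e^{-2α} ψ₂`, and likewise
`∂̄(e^{-α} ψ₂) = e^{-α} (∂̄ψ₂ - ∂̄α ψ₂) = -A e^{-2α} ψ₁`.
-/

section Wirtinger

variable {f g : ℂ → ℂ} {z : ℂ}

lemma fderiv_mul_apply (hf : DifferentiableAt ℝ f z) (hg : DifferentiableAt ℝ g z) (v : ℂ) :
    fderiv ℝ (fun w => f w * g w) z v = fderiv ℝ f z v * g z + f z * fderiv ℝ g z v := by
  rw [fderiv_fun_mul hf hg]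
  simp only [add_apply, smul_apply, smul_eq_mul]
  ring

lemma fderiv_cexp_apply (hf : DifferentiableAt ℝ f z) (v : ℂ) :
    fderiv ℝ (fun w => exp (f w)) z v = exp (f z) * fderiv ℝ f z v := by
  rw [hf.hasFDerivAt.cexp.fderiv, smul_apply, smul_eq_mul]

lemma wd_mul (hf : DifferentiableAt ℝ f z) (hg : DifferentiableAt ℝ g z) :
    wd (fun w => f w * g w) z = wd f z * g z + f z * wd g z := by
  simp only [wd, fderiv_mul_apply hf hg]
  ring

lemma wdb_mul (hf : DifferentiableAt ℝ f z) (hg : DifferentiableAt ℝ g z) :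
    wdb (fun w => f w * g w) z = wdb f z * g z + f z * wdb g z := by
  simp only [wdb, fderiv_mul_apply hf hg]
  ring

lemma wd_cexp (hf : DifferentiableAt ℝ f z) :
    wd (fun w => exp (f w)) z = exp (f z) * wd f z := by
  simp only [wd, fderiv_cexp_apply hf]
  ring

lemma wdb_cexp (hf : DifferentiableAt ℝ f z) :
    wdb (fun w => exp (f w)) z = exp (f z) * wdb f z := by
  simp only [wdb, fderiv_cexp_apply hf]
  ring

lemma wd_neg : wd (fun w => -f w) z = -wd f z := by
  simp only [wd, fderiv_fun_neg, neg_apply]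
  ring

lemma wdb_neg : wdb (fun w => -f w) z = -wdb f z := by
  simp only [wdb, fderiv_fun_neg, neg_apply]
  ring

lemma wd_const (c : ℂ) : wd (fun _ => c) z = 0 := by
  simp [wd]

lemma wdb_const (c : ℂ) : wdb (fun _ => c) z = 0 := by
  simp [wdb]

lemma wd_const_mul_exp_neg_mul (c : ℂ) (hg : DifferentiableAt ℝ g z)
    (hf : DifferentiableAt ℝ f z) :
    wd (fun w => c * exp (-g w) * f w) z = c * exp (-g z) * (wd f z - wd g z * f z) := by
  rw [wd_mul (f := fun w => c * exp (-g w)) (by fun_prop) hf,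
    wd_mul (by fun_prop) (by fun_prop), wd_const, wd_cexp (f := fun w => -g w) hg.neg, wd_neg]
  ring

lemma wdb_const_mul_exp_neg_mul (c : ℂ) (hg : DifferentiableAt ℝ g z)
    (hf : DifferentiableAt ℝ f z) :
    wdb (fun w => c * exp (-g w) * f w) z = c * exp (-g z) * (wdb f z - wdb g z * f z) := by
  rw [wdb_mul (f := fun w => c * exp (-g w)) (by fun_prop) hf,
    wdb_mul (by fun_prop) (by fun_prop), wdb_const, wdb_cexp (f := fun w => -g w) hg.neg, wdb_neg]
  ring

end Wirtinger

theorem stmt15_general (α A : ℂ → ℝ)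
    (hα : ContDiff ℝ 1 α)
    (ψ₁ ψ₂ : ℂ → ℂ) (h1 : ContDiff ℝ 1 ψ₁) (h2 : ContDiff ℝ 1 ψ₂)
    (e1 : ∀ z, wd ψ₁ z = wd (fun w => ((α w : ℝ) : ℂ)) z * ψ₁ z
      + (A z : ℂ) * Complex.exp (-((α z : ℝ) : ℂ)) * ψ₂ z)
    (e4 : ∀ z, wdb ψ₂ z = -(A z : ℂ) * Complex.exp (-((α z : ℝ) : ℂ)) * ψ₁ z
      + wdb (fun w => ((α w : ℝ) : ℂ)) z * ψ₂ z) :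
    (∀ z, wd (fun w => Complex.I * Complex.exp (-((α w : ℝ) : ℂ)) * ψ₁ w) z
      + (-(A z : ℂ) * Complex.exp (-((α z : ℝ) : ℂ))) *
        (Complex.I * Complex.exp (-((α z : ℝ) : ℂ)) * ψ₂ z) = 0) ∧
    (∀ z, -wdb (fun w => Complex.I * Complex.exp (-((α w : ℝ) : ℂ)) * ψ₂ w) z
      + (-(A z : ℂ) * Complex.exp (-((α z : ℝ) : ℂ))) *
        (Complex.I * Complex.exp (-((α z : ℝ) : ℂ)) * ψ₁ z) = 0) := by
  have hα' : Differentiable ℝ fun w => ((α w : ℝ) : ℂ) :=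
    ofRealCLM.differentiable.comp (hα.differentiable one_ne_zero)
  refine ⟨fun z => ?_, fun z => ?_⟩
  · rw [wd_const_mul_exp_neg_mul _ (hα' z) (h1.differentiable one_ne_zero z), e1 z]
    ring
  · rw [wdb_const_mul_exp_neg_mul _ (hα' z) (h2.differentiable one_ne_zero z), e4 z]
    ring

/-- The dual isothermic surface: if ψ solves the Gauss–Weingarten system of an
isothermic surface (real Hopf coefficient A, metric factor e^α, potential U),
then ψ* = (i e^{−α} ψ₂, i e^{−α} ψ₁) solves the Dirac equation with the
potential U* = −A e^{−α} of the dual surface. -/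
theorem stmt15 (α U A : ℂ → ℝ)
    (hα : ContDiff ℝ 1 α) (hU : ContDiff ℝ 1 U) (hA : ContDiff ℝ 1 A)
    (ψ₁ ψ₂ : ℂ → ℂ) (h1 : ContDiff ℝ 1 ψ₁) (h2 : ContDiff ℝ 1 ψ₂)
    (e1 : ∀ z, wd ψ₁ z = wd (fun w => ((α w : ℝ) : ℂ)) z * ψ₁ z
      + (A z : ℂ) * Complex.exp (-((α z : ℝ) : ℂ)) * ψ₂ z)
    (e2 : ∀ z, wd ψ₂ z = -(U z : ℂ) * ψ₁ z)
    (e3 : ∀ z, wdb ψ₁ z = (U z : ℂ) * ψ₂ z)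
    (e4 : ∀ z, wdb ψ₂ z = -(A z : ℂ) * Complex.exp (-((α z : ℝ) : ℂ)) * ψ₁ z
      + wdb (fun w => ((α w : ℝ) : ℂ)) z * ψ₂ z) :
    (∀ z, wd (fun w => Complex.I * Complex.exp (-((α w : ℝ) : ℂ)) * ψ₁ w) z
      + (-(A z : ℂ) * Complex.exp (-((α z : ℝ) : ℂ))) *
        (Complex.I * Complex.exp (-((α z : ℝ) : ℂ)) * ψ₂ z) = 0) ∧
    (∀ z, -wdb (fun w => Complex.I * Complex.exp (-((α w : ℝ) : ℂ)) * ψ₂ w) z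
      + (-(A z : ℂ) * Complex.exp (-((α z : ℝ) : ℂ))) *
        (Complex.I * Complex.exp (-((α z : ℝ) : ℂ)) * ψ₁ z) = 0) :=
  stmt15_general α A hα ψ₁ ψ₂ h1 h2 e1 e4
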